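/- Let A be an invertible positive-definite Hermitian matrix and B Hermitian with ‖A^{-1/2} B A^{-1/2}‖ ≤ 1/2. Then A + B is positive definite and (1/2) A ⪯ A + B ⪯ (3/2) A in the Loewner order. -/

import Mathlib

open Matrix
open scoped ComplexOrder

/-- The square root of a positive semidefinite matrix, as defined in the older Mathlib. -/
noncomputable def Matrix.PosSemidef.sqrt {𝕜 : Type*} [RCLike 𝕜] {n : Type*} [Fintype n]
    [DecidableEq n] {A : Matrix n n 𝕜} (hA : Matrix.PosSemidef A) : Matrix n n 𝕜 :=
  (hA.1.eigenvectorUnitary : Matrix n n 𝕜) *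
    diagonal (fun i => ((Real.sqrt (hA.1.eigenvalues i) : ℝ) : 𝕜)) *
    (star hA.1.eigenvectorUnitary : Matrix n n 𝕜)

/-!
With `S = (A⁻¹)^{1/2}` we have `S A S = 1`, so congruence by the invertible Hermitian matrix `S`
turns the three claims into statements about `1 + T`, `½ + T` and `½ - T`, where `T = S B S` is
Hermitian with `‖T‖ ≤ ½`. All three then follow from `-‖T‖ ≤ T ≤ ‖T‖`, which holds for every
self-adjoint element of a C⋆-algebra.
-/

namespace Matrix

section
open scoped MatrixOrder
variable {𝕜 : Type*} [RCLike 𝕜] {n : Type*} [Fintype n] [DecidableEq n]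

theorem PosSemidef.sqrt_eq_cfcSqrt {A : Matrix n n 𝕜} (hA : A.PosSemidef) :
    hA.sqrt = CFC.sqrt A := by
  rw [CFC.sqrt_eq_real_sqrt A hA.nonneg, cfcₙ_eq_cfc, hA.1.cfc_eq]; rfl

theorem PosSemidef.posSemidef_sqrt {A : Matrix n n 𝕜} (hA : A.PosSemidef) :
    hA.sqrt.PosSemidef := by
  rw [hA.sqrt_eq_cfcSqrt, ← nonneg_iff_posSemidef]
  exact CFC.sqrt_nonneg A

theorem PosDef.sqrt_inv_mul_self_mul_sqrt_inv {A : Matrix n n 𝕜} (hA : A.PosDef) :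
    hA.inv.posSemidef.sqrt * A * hA.inv.posSemidef.sqrt = 1 := by
  have hRR : CFC.sqrt A * CFC.sqrt A = A := CFC.sqrt_mul_sqrt_self A hA.posSemidef.nonneg
  have hR : IsUnit (CFC.sqrt A).det :=
    (isUnit_iff_isUnit_det _).1 (isUnit_of_mul_isUnit_left (hRR ▸ hA.isUnit))
  rw [PosSemidef.sqrt_eq_cfcSqrt, ← hA.posSemidef.inv_sqrt]
  nth_rw 2 [← hRR]
  rw [← Matrix.mul_assoc, nonsing_inv_mul _ hR, Matrix.one_mul, mul_nonsing_inv _ hR]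
end

section
open scoped Matrix.Norms.L2Operator MatrixOrder
variable {n : Type*} [Fintype n] [DecidableEq n] {T : Matrix n n ℂ} {r : ℝ}

theorem IsHermitian.posSemidef_smul_one_sub_of_norm_le (hT : T.IsHermitian)
    (hr : ‖toEuclideanCLM (𝕜 := ℂ) T‖ ≤ r) : ((r : ℂ) • 1 - T).PosSemidef := by
  rw [l2_opNorm_toEuclideanCLM] at hr
  have : T ≤ algebraMap ℝ _ r :=
    (IsSelfAdjoint.le_algebraMap_norm_self hT).trans (algebraMap_mono _ hr)
  rwa [le_iff, Algebra.algebraMap_eq_smul_one, ← Complex.coe_smul] at this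

theorem IsHermitian.posSemidef_smul_one_add_of_norm_le (hT : T.IsHermitian)
    (hr : ‖toEuclideanCLM (𝕜 := ℂ) T‖ ≤ r) : ((r : ℂ) • 1 + T).PosSemidef := by
  simpa using hT.neg.posSemidef_smul_one_sub_of_norm_le (by simpa using hr)

theorem IsHermitian.posDef_smul_one_add_of_norm_lt (hT : T.IsHermitian)
    (hr : ‖toEuclideanCLM (𝕜 := ℂ) T‖ < r) : ((r : ℂ) • 1 + T).PosDef := by
  set s := ‖toEuclideanCLM (𝕜 := ℂ) T‖
  have hsplit : (r : ℂ) • 1 + T = ((r - s : ℝ) : ℂ) • 1 + ((s : ℂ) • 1 + T) := by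
    push_cast; module
  rw [hsplit]
  exact (PosDef.one.smul (by exact_mod_cast sub_pos.2 hr)).add_posSemidef
    (hT.posSemidef_smul_one_add_of_norm_le le_rfl)

end

end Matrix

/-- Stability-neighbourhood perturbation: if `A` is positive definite Hermitian and `B` is
Hermitian with `‖A^{-1/2} B A^{-1/2}‖ ≤ 1/2` (operator norm on Euclidean space), then
`A + B` is positive definite and `(1/2) A ⪯ A + B ⪯ (3/2) A` in the Loewner order. -/
theorem stmt9 (n : ℕ) (A B : Matrix (Fin n) (Fin n) ℂ)
    (hA : A.PosDef) (hB : B.IsHermitian)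
    (hsmall :
      ‖Matrix.toEuclideanCLM (𝕜 := ℂ)
          (hA.inv.posSemidef.sqrt * B * hA.inv.posSemidef.sqrt)‖ ≤ 1 / 2) :
    (A + B).PosDef ∧
    ((A + B) - (1 / 2 : ℂ) • A).PosSemidef ∧
    ((3 / 2 : ℂ) • A - (A + B)).PosSemidef := by
  set S := hA.inv.posSemidef.sqrt
  have hSAS : S * A * S = 1 := hA.sqrt_inv_mul_self_mul_sqrt_inv
  have hSstar : star S = S := hA.inv.posSemidef.posSemidef_sqrt.1
  have hS : IsUnit S := IsUnit.of_mul_eq_one (A * S) (by rw [← Matrix.mul_assoc, hSAS])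
  have hT : (S * B * S).IsHermitian := by
    simpa [← star_eq_conjTranspose, hSstar] using isHermitian_conjTranspose_mul_mul S hB
  have hsmall_lt_one : ‖toEuclideanCLM (𝕜 := ℂ) (S * B * S)‖ < 1 := hsmall.trans_lt (by norm_num)
  refine ⟨?_, ?_, ?_⟩
  · rw [← hS.posDef_star_left_conjugate_iff, hSstar]
    convert hT.posDef_smul_one_add_of_norm_lt hsmall_lt_one using 1
    simp only [Matrix.mul_add, Matrix.add_mul, hSAS, Complex.ofReal_one, one_smul]
  · rw [← hS.posSemidef_star_left_conjugate_iff, hSstar]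
    convert hT.posSemidef_smul_one_add_of_norm_le hsmall using 1
    simp only [Matrix.mul_add, Matrix.add_mul, Matrix.mul_sub, Matrix.sub_mul, Matrix.mul_smul,
      Matrix.smul_mul, hSAS]
    push_cast
    module
  · rw [← hS.posSemidef_star_left_conjugate_iff, hSstar]
    convert hT.posSemidef_smul_one_sub_of_norm_le hsmall using 1
    simp only [Matrix.mul_add, Matrix.add_mul, Matrix.mul_sub, Matrix.sub_mul, Matrix.mul_smul,
      Matrix.smul_mul, hSAS]
    push_cast
    module
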